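/- For any finite-dimensional complex representation V of a finite group G, there exist two distinct polynomials f, g with nonnegative integer coefficients such that f(V) ≅ g(V) as G-representations. -/

import Mathlib

open CategoryTheory CategoryTheory.Limits MonoidalCategory

noncomputable instance {k G : Type} [Field k] [Monoid G] :
    HasFiniteBiproducts (FDRep k G) :=
  HasFiniteBiproducts.of_hasFiniteProducts

/-- `k`-th tensor power of a finite-dimensional representation. -/
noncomputable def tensorPow {k G : Type} [Field k] [Monoid G] (V : FDRep k G) :
    ℕ → FDRep k G
  | 0 => 𝟙_ (FDRep k G)
  | n + 1 => tensorPow V n ⊗ V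

/-- For a polynomial with nonnegative integer coefficients `a : Fin (N+1) → ℕ`,
`polyApply a V = ⊕_k (V^{⊗k})^{⊕ a_k}`. -/
noncomputable def polyApply {k G : Type} [Field k] [Monoid G] {N : ℕ}
    (a : Fin (N + 1) → ℕ) (V : FDRep k G) : FDRep k G :=
  ⨁ fun j : Fin (N + 1) => ⨁ fun _ : Fin (a j) => tensorPow V (j : ℕ)


/-!
Over the semisimple algebra `ℂ[G]` there are only finitely many simple modules `T₁, …, Tᵣ` up
to isomorphism, so each tensor power `V^{⊗j}` is determined by its multiplicity vector
`cⱼ ∈ ℕʳ`, and `f(V)` has multiplicity vector `∑ⱼ f j • cⱼ`. Among the `r + 1` vectors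
`c₀, …, cᵣ` there is a nontrivial integer relation; splitting it into positive and negative
parts gives `f ≠ g` in `ℕ^{r+1}` with `∑ⱼ f j • cⱼ = ∑ⱼ g j • cⱼ`, hence `f(V) ≅ g(V)`.
-/

theorem exists_ne_sum_mul_eq_sum_mul {J κ : Type*} [Fintype J] [Fintype κ]
    (hcard : Fintype.card κ < Fintype.card J) (c : J → κ → ℕ) :
    ∃ f g : J → ℕ, f ≠ g ∧ ∀ k, ∑ j, f j * c j k = ∑ j, g j * c j k := by
  have hdep : ¬ LinearIndependent ℤ fun j k => (c j k : ℤ) := fun h =>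
    hcard.not_ge (by simpa using h.fintype_card_le_finrank)
  obtain ⟨z, hz, j, hj⟩ := Fintype.not_linearIndependent_iff.mp hdep
  refine ⟨fun j => (z j).toNat, fun j => (-z j).toNat, fun h => hj ?_, fun k => ?_⟩
  · have := congrFun h j
    omega
  · have hzk := congrFun hz k
    simp only [Finset.sum_apply, Pi.smul_apply, smul_eq_mul, Pi.zero_apply] at hzk
    zify
    rw [← sub_eq_zero, ← Finset.sum_sub_distrib]
    simpa only [← sub_mul, Int.toNat_sub_toNat_neg] using hzk

theorem Nat.card_fiber_sigma_fin {ι J : Type*} [Fintype J] {X : J → Type*} [∀ j, Finite (X j)]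
    (τ : ∀ j, X j → ι) (f : J → ℕ) (i : ι) :
    Nat.card {p : Σ j, Σ _ : Fin (f j), X j // τ p.1 p.2.2 = i} =
      ∑ j, f j * Nat.card {x // τ j x = i} := by
  classical
  have := fun j => Fintype.ofFinite (X j)
  simp only [Nat.card_eq_fintype_card, Fintype.card_subtype, Finset.card_filter,
    Fintype.sum_sigma]
  simp

theorem LinearEquiv.nonempty_pi_comp_of_card_fiber_eq {A ι X Y : Type*} [Semiring A]
    [Finite X] [Finite Y] (T : ι → Type*) [∀ i, AddCommMonoid (T i)] [∀ i, Module A (T i)]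
    (τ : X → ι) (σ : Y → ι) (h : ∀ i, Nat.card {x // τ x = i} = Nat.card {y // σ y = i}) :
    Nonempty ((Π x, T (τ x)) ≃ₗ[A] Π y, T (σ y)) := by
  obtain ⟨e, he⟩ : ∃ e : X ≃ Y, ∀ x, σ (e x) = τ x :=
    ⟨_, Equiv.ofFiberEquiv_map fun i => (Finite.card_eq.mp (h i)).some⟩
  clear h
  obtain rfl : τ = σ ∘ e := funext fun x => (he x).symm
  exact ⟨LinearEquiv.piCongrLeft A (fun y => T (σ y)) e⟩

theorem IsSemisimpleRing.exists_finite_set_ideal_linearEquiv_of_isSimpleModule (A : Type*)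
    [Ring A] [IsSemisimpleRing A] :
    ∃ s : Set (Ideal A), s.Finite ∧ ∀ (S : Type*) [AddCommGroup S] [Module A S],
      IsSimpleModule A S → ∃ I ∈ s, Nonempty (S ≃ₗ[A] I) := by
  obtain ⟨s, hind, htop, hsimple⟩ := IsSemisimpleModule.exists_sSupIndep_sSup_simples_eq_top A A
  refine ⟨s, WellFoundedGT.finite_of_sSupIndep hind, fun S _ _ hS => ?_⟩
  obtain ⟨I, ⟨eI⟩⟩ := IsSemisimpleRing.exists_linearEquiv_ideal_of_isSimpleModule A S
  have : IsSimpleModule A I := .congr eI.symm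
  have : ∀ m : s, IsSimpleModule A m := fun m => hsimple m m.2
  obtain ⟨m, hm, ⟨e⟩⟩ := Submodule.linearEquiv_of_sSup_eq_top I s htop
  exact ⟨m, hm, ⟨eI.trans e⟩⟩

theorem IsSemisimpleModule.exists_linearEquiv_pi_comp {A ι : Type*} [Ring A] (T : ι → Type*)
    [∀ i, AddCommGroup (T i)] [∀ i, Module A (T i)] (M : Type*) [AddCommGroup M] [Module A M]
    [IsSemisimpleModule A M] [Module.Finite A M]
    (hT : ∀ S : Submodule A M, IsSimpleModule A S → ∃ i, Nonempty (S ≃ₗ[A] T i)) :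
    ∃ (n : ℕ) (τ : Fin n → ι), Nonempty (M ≃ₗ[A] Π x, T (τ x)) := by
  obtain ⟨n, S, e, hS⟩ := IsSemisimpleModule.exists_linearEquiv_fin_dfinsupp A M
  choose τ hτ using fun x => hT (S x) (hS x)
  exact ⟨n, τ, ⟨e.trans <| DFinsupp.linearEquivFunOnFintype.trans <|
    LinearEquiv.piCongrRight fun x => (hτ x).some⟩⟩

namespace FDRep

variable {k G : Type} [Field k] [Monoid G]

noncomputable abbrev toModuleMonoidAlgebra : FDRep k G ⥤ ModuleCat (MonoidAlgebra k G) :=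
  forget₂ (FDRep k G) (Rep k G) ⋙ Rep.toModuleMonoidAlgebra

instance : (toModuleMonoidAlgebra (k := k) (G := G)).Additive where
  map_add := rfl

instance (V : FDRep k G) : Module.Finite (MonoidAlgebra k G) (toModuleMonoidAlgebra.obj V) :=
  let W := (forget₂ (FDRep k G) (Rep k G)).obj V
  -- the carriers agree only up to non-reducible unfolding, so instances are moved by hand
  have : Module.Finite k W := inferInstanceAs (Module.Finite k V)
  have : Module.Finite (MonoidAlgebra k G) W.ρ.asModule := .of_restrictScalars_finite k _ _
  inferInstanceAs (Module.Finite (MonoidAlgebra k G) W.ρ.asModule)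

noncomputable def isoOfLinearEquiv {X Y : FDRep k G}
    (e : toModuleMonoidAlgebra.obj X ≃ₗ[MonoidAlgebra k G] toModuleMonoidAlgebra.obj Y) :
    X ≅ Y :=
  (Functor.FullyFaithful.ofFullyFaithful toModuleMonoidAlgebra).preimageIso e.toModuleIso

noncomputable def biproductLinearEquiv {J : Type} [Finite J] (W : J → FDRep k G) :
    toModuleMonoidAlgebra.obj (⨁ W) ≃ₗ[MonoidAlgebra k G]
      Π j, toModuleMonoidAlgebra.obj (W j) :=
  (toModuleMonoidAlgebra.mapBiproduct W ≪≫ ModuleCat.biproductIsoPi _).toLinearEquiv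

/-- `∑ j, f j * Nat.card {x // τ j x = i}` is the multiplicity of `T i` in `f(V)`. -/
theorem nonempty_polyApply_iso_of_sum_mul_card_fiber_eq {ι : Type} (T : ι → Type)
    [∀ i, AddCommGroup (T i)] [∀ i, Module (MonoidAlgebra k G) (T i)] {V : FDRep k G} {N : ℕ}
    {n : Fin (N + 1) → ℕ} (τ : ∀ j, Fin (n j) → ι)
    (e : ∀ j : Fin (N + 1),
      toModuleMonoidAlgebra.obj (tensorPow V j) ≃ₗ[MonoidAlgebra k G] Π x, T (τ j x))
    {f g : Fin (N + 1) → ℕ}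
    (h : ∀ i, ∑ j, f j * Nat.card {x // τ j x = i} = ∑ j, g j * Nat.card {x // τ j x = i}) :
    Nonempty (polyApply f V ≅ polyApply g V) := by
  let E (f : Fin (N + 1) → ℕ) : toModuleMonoidAlgebra.obj (polyApply f V) ≃ₗ[MonoidAlgebra k G]
      Π p : Σ j, Σ _ : Fin (f j), Fin (n j), T (τ p.1 p.2.2) :=
    (biproductLinearEquiv _).trans <|
      (LinearEquiv.piCongrRight fun j => (biproductLinearEquiv _).trans <|
        (LinearEquiv.piCongrRight fun _ => e j).trans (LinearEquiv.piCurry _ _).symm).trans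
      (LinearEquiv.piCurry _ _).symm
  obtain ⟨efg⟩ := LinearEquiv.nonempty_pi_comp_of_card_fiber_eq (A := MonoidAlgebra k G) T
    (fun p : Σ j, Σ _ : Fin (f j), Fin (n j) => τ p.1 p.2.2)
    (fun p : Σ j, Σ _ : Fin (g j), Fin (n j) => τ p.1 p.2.2)
    fun i => by simp only [Nat.card_fiber_sigma_fin, h]
  exact ⟨isoOfLinearEquiv ((E f).trans (efg.trans (E g).symm))⟩

end FDRep

/-- every finite-dimensional complex representation of a finite group is
finite in Nori's sense: there are distinct polynomials `f ≠ g` with nonnegative integer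
coefficients such that `f(V) ≅ g(V)`. -/
theorem stmt_12 {G : Type} [Group G] [Finite G] (V : FDRep ℂ G) :
    ∃ (N : ℕ) (f g : Fin (N + 1) → ℕ), f ≠ g ∧ Nonempty (polyApply f V ≅ polyApply g V) := by
  obtain ⟨s, hs, hsimple⟩ :=
    IsSemisimpleRing.exists_finite_set_ideal_linearEquiv_of_isSimpleModule (MonoidAlgebra ℂ G)
  have := hs.fintype
  let T (I : s) : Type := (I : Ideal (MonoidAlgebra ℂ G))
  choose n τ e using fun j : Fin (Fintype.card s + 1) =>
    IsSemisimpleModule.exists_linearEquiv_pi_comp T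
      (FDRep.toModuleMonoidAlgebra.obj (tensorPow V j))
      fun S hS => let ⟨I, hI, e⟩ := hsimple S hS; ⟨⟨I, hI⟩, e⟩
  obtain ⟨f, g, hfg, hmult⟩ :=
    exists_ne_sum_mul_eq_sum_mul (by simp) fun j i => Nat.card {x // τ j x = i}
  exact ⟨_, f, g, hfg,
    FDRep.nonempty_polyApply_iso_of_sum_mul_card_fiber_eq T τ (fun j => (e j).some) hmult⟩
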